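/- Let μ be a Haar measure on the locally compact additive group ℚ_p normalized so that μ(ℤ_p) = 1, and let α ∈ {-v, p, p/u}. Then for every integer k ≤ 0, the integral of the function σ ↦ 1/|1 + α·σ²|_p over the disc D_k(0) = {σ ∈ ℚ_p : |σ|_p ≤ p^k} equals p^k. -/

import Mathlib

/-!
On the unit disc the integrand is identically `1`. For `α = p` and `α = p / u` this is because
`‖α σ²‖ < 1`. For `α = -v` a drop of `‖1 - v σ²‖` below `1` would make the residue of `v` a square
mod `p`: for `p ≡ 3 (mod 4)` the residue is `-1`, and for `p ≡ 1 (mod 4)` it is `-ū` with `-1` a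
square, so Hensel's lemma would make `u` a square. The integral is therefore the measure of the
disc of radius `p ^ (-n)`, `n = -k`, which is `p ^ (-n)` because `p ^ n` disjoint translates of it,
centred at `0, 1, …, p ^ n - 1`, tile `ℤ_p`.
-/

open MeasureTheory

noncomputable instance Qp.measurableSpace (p : ℕ) [Fact p.Prime] :
    MeasurableSpace ℚ_[p] := borel _

instance Qp.borelSpace (p : ℕ) [Fact p.Prime] : BorelSpace ℚ_[p] := ⟨rfl⟩

lemma norm_one_add_eq_one_of_norm_lt_one {R : Type*} [NormedRing R] [NormOneClass R]
    [IsUltrametricDist R] {x : R} (hx : ‖x‖ < 1) : ‖1 + x‖ = 1 := by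
  rw [IsUltrametricDist.norm_add_eq_max_of_norm_ne_norm (by rw [norm_one]; exact hx.ne'),
    norm_one, max_eq_left hx.le]

namespace PadicInt

variable {p : ℕ} [Fact p.Prime]

lemma toZMod_eq_zero_iff_norm_lt_one (x : ℤ_[p]) : toZMod x = 0 ↔ ‖x‖ < 1 := by
  rw [← RingHom.mem_ker, ker_toZMod, IsLocalRing.mem_maximalIdeal, mem_nonunits]

lemma isSquare_of_isSquare_toZMod (hp : p ≠ 2) {u : ℤ_[p]} (hu : ‖u‖ = 1)
    (h : IsSquare (toZMod u)) : IsSquare u := by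
  obtain ⟨w, hw⟩ := h
  set a : ℤ_[p] := (w.val : ℤ_[p])
  have hwa : toZMod a = w := by simp [a]
  have ha : ‖a‖ = 1 := by
    refine le_antisymm (norm_le_one a) (not_lt.mp fun ha => ?_)
    rw [← toZMod_eq_zero_iff_norm_lt_one, hwa] at ha
    rw [ha, mul_zero, toZMod_eq_zero_iff_norm_lt_one, hu] at hw
    exact lt_irrefl 1 hw
  have h2 : ‖(2 : ℤ_[p])‖ = 1 := by
    have : ‖((2 : ℕ) : ℚ_[p])‖ = 1 :=
      Padic.norm_natCast_eq_one_iff.mpr ((Nat.coprime_primes Fact.out Nat.prime_two).mpr hp)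
    exact_mod_cast this
  -- `w` is a simple root of `X ^ 2 - ū` because `2 w ≠ 0` in `ZMod p`; Hensel lifts it.
  have hlt : ‖(Polynomial.X ^ 2 - Polynomial.C u).aeval a‖ <
      ‖(Polynomial.X ^ 2 - Polynomial.C u).derivative.aeval a‖ ^ 2 := by
    simp only [Polynomial.aeval_sub, Polynomial.aeval_X_pow, Polynomial.aeval_C,
      Polynomial.derivative_sub, Polynomial.derivative_X_pow, Polynomial.derivative_C,
      Polynomial.aeval_mul, Polynomial.aeval_X, sub_zero, Algebra.algebraMap_self, RingHom.id_apply,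
      Nat.add_one_sub_one, pow_one, Nat.cast_ofNat]
    rw [norm_mul, ha, mul_one, h2, one_pow,
      ← toZMod_eq_zero_iff_norm_lt_one, map_sub, map_pow, hwa, hw, sq, sub_self]
  obtain ⟨z, hz, -⟩ := hensels_lemma hlt
  simp only [Polynomial.aeval_sub, Polynomial.aeval_X_pow, Polynomial.aeval_C,
    Algebra.algebraMap_self, RingHom.id_apply, sub_eq_zero] at hz
  exact ⟨z, hz ▸ sq z⟩

lemma norm_one_sub_mul_sq_eq_one {v : ℤ_[p]} (hv : ¬ IsSquare (toZMod v)) (s : ℤ_[p]) :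
    ‖1 - v * s ^ 2‖ = 1 := by
  refine le_antisymm (norm_le_one _) (not_lt.mp fun h => hv ?_)
  rw [← toZMod_eq_zero_iff_norm_lt_one, map_sub, map_one, map_mul, map_pow, sub_eq_zero] at h
  have hs : toZMod s ≠ 0 := by rintro hs; simp [hs] at h
  exact ⟨(toZMod s)⁻¹, by field_simp; linear_combination -h⟩

lemma not_isSquare_toZMod_neg_one (hp : p % 4 = 3) : ¬ IsSquare (toZMod (-1 : ℤ_[p])) := by
  rw [map_neg, map_one, ZMod.exists_sq_eq_neg_one_iff]
  exact not_not.mpr hp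

lemma not_isSquare_toZMod_neg (hp : p % 4 = 1) {u : ℤ_[p]} (hu : ‖u‖ = 1)
    (husq : ¬ IsSquare u) : ¬ IsSquare (toZMod (-u)) := by
  rintro ⟨t, ht⟩
  obtain ⟨i, hi⟩ := ZMod.exists_sq_eq_neg_one_iff.mpr (by omega : p % 4 ≠ 3)
  refine husq (isSquare_of_isSquare_toZMod (by omega) hu ⟨i * t, ?_⟩)
  rw [map_neg] at ht
  linear_combination (t * t) * hi - ht

end PadicInt

namespace Padic

variable {p : ℕ} [Fact p.Prime]

lemma norm_one_sub_mul_sq_eq_one {v : ℤ_[p]} (hv : ¬ IsSquare (PadicInt.toZMod v)) {σ : ℚ_[p]}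
    (hσ : ‖σ‖ ≤ 1) : ‖1 - v * σ ^ 2‖ = 1 := by
  have := PadicInt.norm_one_sub_mul_sq_eq_one hv ⟨σ, hσ⟩
  rwa [PadicInt.norm_def] at this

lemma norm_one_add_mul_sq_eq_one_of_norm_lt_one {α σ : ℚ_[p]} (hα : ‖α‖ < 1) (hσ : ‖σ‖ ≤ 1) :
    ‖1 + α * σ ^ 2‖ = 1 := by
  refine norm_one_add_eq_one_of_norm_lt_one ?_
  rw [norm_mul, norm_pow]
  exact mul_lt_one_of_nonneg_of_lt_one_left (norm_nonneg _) hα (pow_le_one₀ (norm_nonneg _) hσ)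

lemma norm_one_add_mul_sq_eq_one_of_mem (hp2 : 2 < p)
    {u : ℤ_[p]} (hu : ‖u‖ = 1) (husq : ¬ ∃ y : ℚ_[p], y ^ 2 = (u : ℚ_[p]))
    {v : ℤ_[p]} (hv3 : p % 4 = 3 → v = -1) (hv1 : p % 4 = 1 → v = -u) {α : ℚ_[p]}
    (hα : α ∈ ({-(v : ℚ_[p]), (p : ℚ_[p]), (p : ℚ_[p]) / (u : ℚ_[p])} : Set ℚ_[p]))
    {σ : ℚ_[p]} (hσ : ‖σ‖ ≤ 1) : ‖1 + α * σ ^ 2‖ = 1 := by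
  have hp_lt : ‖(p : ℚ_[p])‖ < 1 := by
    rw [norm_p]; exact inv_lt_one_of_one_lt₀ (mod_cast (Fact.out : p.Prime).one_lt)
  rcases hα with rfl | rfl | rfl
  · have hv : ¬ IsSquare (PadicInt.toZMod v) := by
      have hodd : p % 2 = 1 := Nat.odd_iff.mp ((Fact.out : p.Prime).odd_of_ne_two hp2.ne')
      rcases (by omega : p % 4 = 1 ∨ p % 4 = 3) with h | h
      · rw [hv1 h]
        refine PadicInt.not_isSquare_toZMod_neg h hu fun ⟨z, hz⟩ => husq ⟨z, ?_⟩
        rw [hz]; push_cast; ring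
      · rw [hv3 h]; exact PadicInt.not_isSquare_toZMod_neg_one h
    rw [neg_mul, ← sub_eq_add_neg]
    exact norm_one_sub_mul_sq_eq_one hv hσ
  · exact norm_one_add_mul_sq_eq_one_of_norm_lt_one hp_lt hσ
  · refine norm_one_add_mul_sq_eq_one_of_norm_lt_one ?_ hσ
    rwa [norm_div, PadicInt.padic_norm_e_of_padicInt, hu, div_one]

lemma exists_natCast_norm_sub_le {x : ℚ_[p]} (hx : ‖x‖ ≤ 1) (n : ℕ) :
    ∃ j < p ^ n, ‖x - j‖ ≤ (p : ℝ) ^ (-n : ℤ) := by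
  set X : ℤ_[p] := ⟨x, hx⟩
  refine ⟨X.appr n, X.appr_lt n, ?_⟩
  have := (PadicInt.norm_le_pow_iff_mem_span_pow _ n).mpr (X.appr_spec n)
  rwa [PadicInt.norm_def] at this

lemma eq_of_norm_natCast_sub_le {n i j : ℕ} (hi : i < p ^ n) (hj : j < p ^ n)
    (h : ‖(i : ℚ_[p]) - j‖ ≤ (p : ℝ) ^ (-n : ℤ)) : i = j := by
  have hdvd : ((p ^ n : ℕ) : ℤ) ∣ (i : ℤ) - j := by
    push_cast
    exact (norm_int_le_pow_iff_dvd _ n).mp (by push_cast; exact h)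
  have := Int.eq_zero_of_abs_lt_dvd hdvd (by rw [abs_sub_lt_iff]; omega)
  omega

lemma setOf_norm_le_one_eq_biUnion (n : ℕ) :
    {x : ℚ_[p] | ‖x‖ ≤ 1} = ⋃ j ∈ Finset.range (p ^ n),
      (fun x => -(j : ℚ_[p]) + x) ⁻¹' {x | ‖x‖ ≤ (p : ℝ) ^ (-n : ℤ)} := by
  ext x
  simp only [Set.mem_ofPred_eq, Set.mem_iUnion, Set.mem_preimage, Finset.mem_range,
    neg_add_eq_sub, exists_prop]
  refine ⟨fun hx => exists_natCast_norm_sub_le hx n, fun ⟨j, _, hj⟩ => ?_⟩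
  have hr : (p : ℝ) ^ (-n : ℤ) ≤ 1 :=
    zpow_le_one_of_nonpos₀ (mod_cast (Fact.out : p.Prime).one_le) (by omega)
  have hj1 : ‖(j : ℚ_[p])‖ ≤ 1 := by simpa using norm_int_le_one (p := p) j
  simpa using (nonarchimedean (x - (j : ℚ_[p])) (j : ℚ_[p])).trans (max_le (hj.trans hr) hj1)

lemma measure_setOf_norm_le_zpow_neg (μ : Measure ℚ_[p]) [μ.IsAddHaarMeasure]
    (hnorm : μ {x : ℚ_[p] | ‖x‖ ≤ 1} = 1) (n : ℕ) :
    μ {x : ℚ_[p] | ‖x‖ ≤ (p : ℝ) ^ (-n : ℤ)} = ((p : ENNReal) ^ n)⁻¹ := by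
  have hdisj : (Finset.range (p ^ n) : Set ℕ).PairwiseDisjoint fun j : ℕ =>
      (fun x => -(j : ℚ_[p]) + x) ⁻¹' {x | ‖x‖ ≤ (p : ℝ) ^ (-n : ℤ)} := by
    intro i hi j hj hij
    refine Set.disjoint_left.mpr fun x hxi hxj => hij (eq_of_norm_natCast_sub_le
      (Finset.mem_range.mp hi) (Finset.mem_range.mp hj) ?_)
    simp only [Set.mem_preimage, Set.mem_ofPred_eq, neg_add_eq_sub] at hxi hxj
    have := nonarchimedean (x - (j : ℚ_[p])) (-(x - (i : ℚ_[p])))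
    rw [norm_neg] at this
    exact (by ring : (i : ℚ_[p]) - j = x - j + -(x - i)) ▸ this.trans (max_le hxj hxi)
  have hmeas : MeasurableSet {x : ℚ_[p] | ‖x‖ ≤ (p : ℝ) ^ (-n : ℤ)} :=
    (isClosed_le continuous_norm continuous_const).measurableSet
  have hsum := measure_biUnion_finset (μ := μ) hdisj
    fun j _ => hmeas.preimage (measurable_const_add _)
  rw [← setOf_norm_le_one_eq_biUnion, hnorm] at hsum
  simp only [measure_preimage_add, Finset.sum_const, Finset.card_range, nsmul_eq_mul,
    Nat.cast_pow] at hsum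
  rw [mul_comm] at hsum
  exact ENNReal.eq_inv_of_mul_eq_one_left hsum.symm

lemma measureReal_setOf_norm_le_zpow (μ : Measure ℚ_[p]) [μ.IsAddHaarMeasure]
    (hnorm : μ {x : ℚ_[p] | ‖x‖ ≤ 1} = 1) {k : ℤ} (hk : k ≤ 0) :
    μ.real {x : ℚ_[p] | ‖x‖ ≤ (p : ℝ) ^ k} = (p : ℝ) ^ k := by
  obtain ⟨n, rfl⟩ : ∃ n : ℕ, k = -n := ⟨k.natAbs, by omega⟩
  rw [measureReal_def, measure_setOf_norm_le_zpow_neg μ hnorm, ENNReal.toReal_inv,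
    ENNReal.toReal_pow, ENNReal.toReal_natCast, zpow_neg, zpow_natCast]

end Padic

theorem stmt18 (p : ℕ) [Fact p.Prime] (hp2 : 2 < p)
    (u : ℤ_[p]) (hu : ‖u‖ = 1) (husq : ¬ ∃ y : ℚ_[p], y ^ 2 = (u : ℚ_[p]))
    (v : ℤ_[p]) (hv3 : p % 4 = 3 → v = -1) (hv1 : p % 4 = 1 → v = -u)
    (μ : Measure ℚ_[p]) (hμ : μ.IsAddHaarMeasure)
    (hnorm : μ {x : ℚ_[p] | ‖x‖ ≤ 1} = 1) :
    ∀ α : ℚ_[p],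
      α ∈ ({-(v : ℚ_[p]), (p : ℚ_[p]), (p : ℚ_[p]) / (u : ℚ_[p])} : Set ℚ_[p]) →
      ∀ k : ℤ, k ≤ 0 →
        ∫ σ in {x : ℚ_[p] | ‖x‖ ≤ (p : ℝ) ^ k}, 1 / ‖1 + α * σ ^ 2‖ ∂μ = (p : ℝ) ^ k := by
  intro α hα k hk
  have hr : (p : ℝ) ^ k ≤ 1 := zpow_le_one_of_nonpos₀ (mod_cast (Fact.out : p.Prime).one_le) hk
  have h_one : Set.EqOn (fun σ : ℚ_[p] => 1 / ‖1 + α * σ ^ 2‖) (fun _ => 1)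
      {x : ℚ_[p] | ‖x‖ ≤ (p : ℝ) ^ k} := fun σ hσ => by
    simp [Padic.norm_one_add_mul_sq_eq_one_of_mem hp2 hu husq hv3 hv1 hα (hσ.trans hr)]
  rw [setIntegral_congr_fun (isClosed_le continuous_norm continuous_const).measurableSet h_one,
    setIntegral_const, Padic.measureReal_setOf_norm_le_zpow μ hnorm hk, smul_eq_mul, mul_one]
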